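/- arXiv:2009.13040 — 2 statements merged into one kernel-verified Lean document; each statement's English description precedes it below -/
import Mathlib

section
/- β ∈ R^{d×k} is a stationary point of the population negative log-likelihood L of fitting a k-component Gaussian mixture to a true k*-component mixture if and only if for all i ∈ [k]: Σ_{j∈[k]} β_j Σ_{s∈[k*]} E_s[Ψ_i Ψ_j] = Σ_{s∈[k*]} θ*_s E_s[Ψ_i], where E_s denotes expectation under N(θ*_s, σ²I_d). -/
/-!
Under a single component `N(θ, σ²I)`, Stein's identity `E[g(X) (X - θ)] = σ² E[∇g(X)]` holds
because the gradient of `φ_θ g` integrates to zero. The association coefficients are a softmax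
of the exponents `-‖x - β_ℓ‖² / 2σ²`, so `∇Ψ_i = Ψ_i (β_i - Σ_ℓ Ψ_ℓ β_ℓ) / σ²`, and Stein's identity
for `g = Ψ_i` gives `E_s[Ψ_i (β_i - X)] = Σ_ℓ E_s[Ψ_i Ψ_ℓ] β_ℓ - E_s[Ψ_i] θ_s`. Averaging over the
true components `s` turns the stationarity equation for `β_i` into the stated linear equation.
-/

open MeasureTheory Real

/-- Density of `N(μ, σ²I_d)` on `ℝ^d`. -/
noncomputable def gaussDensity {d : ℕ} (σ : ℝ) (μ x : EuclideanSpace ℝ (Fin d)) : ℝ :=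
  ((Real.sqrt (2 * π) * σ)⁻¹) ^ d * Real.exp (-‖x - μ‖ ^ 2 / (2 * σ ^ 2))

/-- Density of an equally weighted Gaussian mixture with centers `θ` and covariance `σ²I_d`. -/
noncomputable def mixDensity {d n : ℕ} (σ : ℝ) (θ : Fin n → EuclideanSpace ℝ (Fin d))
    (x : EuclideanSpace ℝ (Fin d)) : ℝ :=
  (n : ℝ)⁻¹ * ∑ s, gaussDensity σ (θ s) x

/-- Association coefficient `ψ_j(x)` of a data point `x` with the fitted center `β j`. -/
noncomputable def assocCoef {d k : ℕ} (σ : ℝ) (β : Fin k → EuclideanSpace ℝ (Fin d))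
    (j : Fin k) (x : EuclideanSpace ℝ (Fin d)) : ℝ :=
  Real.exp (-‖x - β j‖ ^ 2 / (2 * σ ^ 2)) / ∑ ℓ, Real.exp (-‖x - β ℓ‖ ^ 2 / (2 * σ ^ 2))

section
variable {E : Type*} [NormedAddCommGroup E] [InnerProductSpace ℝ E]

theorem hasFDerivAt_neg_sq_norm_sub_div (σ : ℝ) (μ x : E) :
    HasFDerivAt (fun y ↦ -‖y - μ‖ ^ 2 / (2 * σ ^ 2)) (innerSL ℝ ((σ ^ 2)⁻¹ • (μ - x))) x := by
  have e : (fun y ↦ -‖y - μ‖ ^ 2 / (2 * σ ^ 2)) = fun y ↦ ‖y - μ‖ ^ 2 * -(2 * σ ^ 2)⁻¹ := by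
    ext y; ring
  rw [e]
  refine (((hasFDerivAt_id x).sub_const μ).norm_sq.mul_const _).congr_fderiv ?_
  ext v
  simp only [mul_inv_rev, id_eq, map_sub, ContinuousLinearMap.comp_id, neg_smul, neg_apply,
    smul_apply, sub_apply, coe_innerSL_apply, nsmul_eq_mul, Nat.cast_ofNat, smul_eq_mul, map_smul]
  ring

theorem integral_eq_zero_of_hasFDerivAt_innerSL [FiniteDimensional ℝ E] [MeasurableSpace E]
    [BorelSpace E] {μ : Measure E} [μ.IsAddHaarMeasure] {f : E → ℝ} {g : E → E}
    (hf : ∀ x, HasFDerivAt f (innerSL ℝ (g x)) x) (hfi : Integrable f μ)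
    (hgi : Integrable g μ) : ∫ x, g x ∂μ = 0 := by
  refine ext_inner_left ℝ fun v ↦ ?_
  rw [← integral_inner hgi, inner_zero_right]
  have := integral_bilinear_hasFDerivAt_right_eq_neg_left_of_integrable
    (B := ContinuousLinearMap.mul ℝ ℝ) (f := fun _ ↦ 1) (f' := fun _ ↦ 0)
    (g' := fun x ↦ innerSL ℝ (g x)) (v := v) (μ := μ) (by simp) ?_ (by simpa using hfi)
    (fun x _ ↦ hasFDerivAt_const 1 x) (fun x _ ↦ hf x)
  · simpa [real_inner_comm] using this
  · simpa [real_inner_comm] using hgi.inner_const (𝕜 := ℝ) v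
end

section
variable {E : Type*} [NormedAddCommGroup E] [NormedSpace ℝ E]

theorem hasFDerivAt_exp_div_sum_exp {ι : Type*} [Fintype ι] {h : ι → E → ℝ}
    {h' : ι → E →L[ℝ] ℝ} {x : E} (hh : ∀ ℓ, HasFDerivAt (h ℓ) (h' ℓ) x) (j : ι) :
    HasFDerivAt (fun y ↦ exp (h j y) / ∑ ℓ, exp (h ℓ y))
      ((exp (h j x) / ∑ ℓ, exp (h ℓ x)) •
        (h' j - ∑ ℓ, (exp (h ℓ x) / ∑ m, exp (h m x)) • h' ℓ)) x := by
  have hS : ∑ ℓ, exp (h ℓ x) ≠ 0 :=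
    (Finset.sum_pos (fun _ _ ↦ exp_pos _) ⟨j, Finset.mem_univ j⟩).ne'
  have hsum := HasFDerivAt.fun_sum (u := Finset.univ) fun ℓ _ ↦ (hh ℓ).exp
  refine ((hh j).exp.mul ((hasDerivAt_inv hS).comp_hasFDerivAt x hsum)).congr_fderiv ?_
  ext v
  simp only [add_apply, smul_apply, sub_apply, FunLike.coe_sum, Finset.sum_apply, smul_eq_mul,
    Function.comp_apply, div_mul_eq_mul_div, ← Finset.sum_div]
  field_simp
  ring

theorem integrable_pow_norm_mul_exp_neg_mul_sq_norm [FiniteDimensional ℝ E] [MeasurableSpace E]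
    [BorelSpace E] (μ : Measure E) [μ.IsAddHaarMeasure] (n : ℕ) {b : ℝ} (hb : 0 < b) :
    Integrable (fun x ↦ ‖x‖ ^ n * exp (-b * ‖x‖ ^ 2)) μ := by
  rcases subsingleton_or_nontrivial E with hE | hE
  · exact Integrable.of_finite
  rw [integrable_fun_norm_addHaar μ (f := fun y ↦ y ^ n * exp (-b * y ^ 2))]
  have hs : (-1 : ℝ) < ((Module.finrank ℝ E - 1 + n : ℕ) : ℝ) := by
    linarith [(Module.finrank ℝ E - 1 + n : ℕ).cast_nonneg (α := ℝ)]
  refine (integrableOn_rpow_mul_exp_neg_mul_sq hb hs).congr_fun (fun y _ ↦ ?_) measurableSet_Ioi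
  simp only [rpow_natCast, smul_eq_mul, pow_add]
  ring
end

section Gaussian
variable {d : ℕ}
local notation "E" => EuclideanSpace ℝ (Fin d)

theorem hasFDerivAt_gaussDensity (σ : ℝ) (μ x : E) :
    HasFDerivAt (gaussDensity σ μ) (innerSL ℝ ((σ ^ 2)⁻¹ • gaussDensity σ μ x • (μ - x))) x := by
  refine ((hasFDerivAt_neg_sq_norm_sub_div σ μ x).exp.const_mul _).congr_fderiv ?_
  ext v
  simp only [map_smul, map_sub, smul_apply, sub_apply, coe_innerSL_apply, smul_eq_mul,
    gaussDensity]
  ring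

theorem integrable_gaussDensity_smul {F : Type*} [NormedAddCommGroup F] [NormedSpace ℝ F]
    {σ : ℝ} (hσ : σ ≠ 0) (μ : E) {w : E → F} (hw : AEStronglyMeasurable w) {a b : ℝ}
    (hab : ∀ x, ‖w x‖ ≤ a + b * ‖x - μ‖) :
    Integrable (fun x ↦ gaussDensity σ μ x • w x) := by
  set c := |((Real.sqrt (2 * π) * σ)⁻¹) ^ d|
  have hr : 0 < (2 * σ ^ 2)⁻¹ := by positivity
  have hint (n : ℕ) := (integrable_pow_norm_mul_exp_neg_mul_sq_norm volume n hr).comp_sub_right μ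
  have hcont : Continuous (gaussDensity σ μ) := by unfold gaussDensity; fun_prop
  refine (((hint 0).const_mul (c * a)).add ((hint 1).const_mul (c * b))).mono'
    (hcont.aestronglyMeasurable.smul hw) (.of_forall fun x ↦ ?_)
  have hφ : ‖gaussDensity σ μ x‖ = c * exp (-(2 * σ ^ 2)⁻¹ * ‖x - μ‖ ^ 2) := by
    rw [gaussDensity, norm_mul, norm_of_nonneg (exp_pos _).le, Real.norm_eq_abs, neg_div,
      div_eq_inv_mul, ← neg_mul]
  calc ‖gaussDensity σ μ x • w x‖
      ≤ c * exp (-(2 * σ ^ 2)⁻¹ * ‖x - μ‖ ^ 2) * (a + b * ‖x - μ‖) := by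
        rw [norm_smul, hφ]; gcongr; exact hab x
    _ = _ := by simp only [Pi.add_apply, pow_zero, pow_one]; ring

theorem stein_identity_gaussDensity {σ : ℝ} (hσ : σ ≠ 0) (θ : E) {g : E → ℝ} {G : E → E}
    (hg : ∀ x, HasFDerivAt g (innerSL ℝ (G x)) x)
    (hgi : Integrable (fun x ↦ gaussDensity σ θ x * g x))
    (hGi : Integrable (fun x ↦ gaussDensity σ θ x • G x))
    (hxgi : Integrable (fun x ↦ (gaussDensity σ θ x * g x) • (x - θ))) :
    ∫ x, (gaussDensity σ θ x * g x) • (x - θ) = σ ^ 2 • ∫ x, gaussDensity σ θ x • G x := by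
  have hderiv (x : E) : HasFDerivAt (fun y ↦ gaussDensity σ θ y * g y) (innerSL ℝ
      (gaussDensity σ θ x • G x - (σ ^ 2)⁻¹ • (gaussDensity σ θ x * g x) • (x - θ))) x := by
    refine ((hasFDerivAt_gaussDensity σ θ x).mul (hg x)).congr_fderiv ?_
    ext v
    simp only [map_smul, map_sub, add_apply, smul_apply, coe_innerSL_apply, smul_eq_mul,
      sub_apply]
    ring
  have hxgi' : Integrable (fun x ↦ (σ ^ 2)⁻¹ • (gaussDensity σ θ x * g x) • (x - θ)) :=
    hxgi.smul (σ ^ 2)⁻¹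
  have h0 := integral_eq_zero_of_hasFDerivAt_innerSL hderiv hgi (hGi.sub hxgi')
  rw [integral_sub hGi hxgi', integral_smul, sub_eq_zero] at h0
  rw [h0, smul_smul, mul_inv_cancel₀ (pow_ne_zero 2 hσ), one_smul]

theorem integral_mixDensity_mul_smul {F : Type*} [NormedAddCommGroup F] [NormedSpace ℝ F]
    {n : ℕ} (σ : ℝ) (θ : Fin n → E) {g : E → ℝ} {v : E → F}
    (hint : ∀ s, Integrable fun x ↦ (gaussDensity σ (θ s) x * g x) • v x) :
    ∫ x, (mixDensity σ θ x * g x) • v x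
      = (n : ℝ)⁻¹ • ∑ s, ∫ x, (gaussDensity σ (θ s) x * g x) • v x := by
  rw [← integral_finsetSum _ fun s _ ↦ hint s, ← integral_smul]
  congr 1 with x
  simp only [mixDensity, mul_assoc, Finset.sum_mul, mul_smul, Finset.sum_smul]

end Gaussian

section Mixture
variable {d k : ℕ}
local notation "E" => EuclideanSpace ℝ (Fin d)

noncomputable def assocMean (σ : ℝ) (β : Fin k → E) (x : E) : E :=
  ∑ ℓ, assocCoef σ β ℓ x • β ℓ

theorem assocCoef_nonneg (σ : ℝ) (β : Fin k → E) (j : Fin k) (x : E) :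
    0 ≤ assocCoef σ β j x :=
  div_nonneg (exp_pos _).le (Finset.sum_nonneg fun _ _ ↦ (exp_pos _).le)

theorem assocCoef_le_one (σ : ℝ) (β : Fin k → E) (j : Fin k) (x : E) :
    assocCoef σ β j x ≤ 1 :=
  div_le_one_of_le₀ (Finset.single_le_sum (f := fun ℓ ↦ exp (-‖x - β ℓ‖ ^ 2 / (2 * σ ^ 2)))
    (fun _ _ ↦ (exp_pos _).le) (Finset.mem_univ j)) (Finset.sum_nonneg fun _ _ ↦ (exp_pos _).le)

theorem sum_assocCoef [Nonempty (Fin k)] (σ : ℝ) (β : Fin k → E) (x : E) :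
    ∑ ℓ, assocCoef σ β ℓ x = 1 := by
  simp only [assocCoef, ← Finset.sum_div]
  exact div_self (Finset.sum_pos (fun _ _ ↦ exp_pos _) Finset.univ_nonempty).ne'

theorem norm_assocMean_le (σ : ℝ) (β : Fin k → E) (x : E) :
    ‖assocMean σ β x‖ ≤ ∑ ℓ, ‖β ℓ‖ := by
  refine (norm_sum_le _ _).trans (Finset.sum_le_sum fun ℓ _ ↦ ?_)
  rw [norm_smul, norm_of_nonneg (assocCoef_nonneg σ β ℓ x)]
  exact mul_le_of_le_one_left (norm_nonneg _) (assocCoef_le_one σ β ℓ x)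

theorem norm_sub_assocMean_le (σ : ℝ) (β : Fin k → E) (c x : E) :
    ‖c - assocMean σ β x‖ ≤ ‖c‖ + ∑ ℓ, ‖β ℓ‖ :=
  (norm_sub_le _ _).trans (by gcongr; exact norm_assocMean_le σ β x)

theorem hasFDerivAt_assocCoef (σ : ℝ) (β : Fin k → E) (j : Fin k) (x : E) :
    HasFDerivAt (assocCoef σ β j)
      (innerSL ℝ ((σ ^ 2)⁻¹ • assocCoef σ β j x • (β j - assocMean σ β x))) x := by
  have : Nonempty (Fin k) := ⟨j⟩
  refine (hasFDerivAt_exp_div_sum_exp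
    (fun ℓ ↦ hasFDerivAt_neg_sq_norm_sub_div σ (β ℓ) x) j).congr_fderiv ?_
  have hm : ∑ ℓ, assocCoef σ β ℓ x • (β ℓ - x) = assocMean σ β x - x := by
    simp only [smul_sub, Finset.sum_sub_distrib, ← Finset.sum_smul, sum_assocCoef, one_smul,
      assocMean]
  change assocCoef σ β j x • (innerSL ℝ ((σ ^ 2)⁻¹ • (β j - x)) -
    ∑ ℓ, assocCoef σ β ℓ x • innerSL ℝ ((σ ^ 2)⁻¹ • (β ℓ - x))) = _
  rw [show β j - assocMean σ β x = (β j - x) - ∑ ℓ, assocCoef σ β ℓ x • (β ℓ - x) by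
    rw [hm]; abel]
  simp only [map_smul, map_sub, map_sum, smul_sub, Finset.smul_sum, smul_comm (σ ^ 2)⁻¹]

theorem continuous_assocCoef (σ : ℝ) (β : Fin k → E) (j : Fin k) :
    Continuous (assocCoef σ β j) :=
  continuous_iff_continuousAt.2 fun x ↦ (hasFDerivAt_assocCoef σ β j x).continuousAt

theorem continuous_assocMean (σ : ℝ) (β : Fin k → E) : Continuous (assocMean σ β) :=
  continuous_finsetSum _ fun ℓ _ ↦ (continuous_assocCoef σ β ℓ).smul continuous_const

theorem integrable_gaussDensity_mul_assocCoef_smul {F : Type*} [NormedAddCommGroup F]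
    [NormedSpace ℝ F] {σ : ℝ} (hσ : σ ≠ 0) (θ : E) (β : Fin k → E) (i : Fin k) {w : E → F}
    (hw : Continuous w) {a b : ℝ} (hab : ∀ x, ‖w x‖ ≤ a + b * ‖x - θ‖) :
    Integrable (fun x ↦ (gaussDensity σ θ x * assocCoef σ β i x) • w x) := by
  simp only [mul_smul]
  refine integrable_gaussDensity_smul hσ θ (a := a) (b := b)
    ((continuous_assocCoef σ β i).smul hw).aestronglyMeasurable fun x ↦ ?_
  rw [norm_smul, norm_of_nonneg (assocCoef_nonneg σ β i x)]
  exact (mul_le_of_le_one_left (norm_nonneg _) (assocCoef_le_one σ β i x)).trans (hab x)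

theorem integrable_gaussDensity_mul_assocCoef {σ : ℝ} (hσ : σ ≠ 0) (θ : E) (β : Fin k → E)
    (i : Fin k) : Integrable (fun x ↦ gaussDensity σ θ x * assocCoef σ β i x) := by
  simpa using integrable_gaussDensity_mul_assocCoef_smul hσ θ β i (w := fun _ ↦ (1 : ℝ))
    continuous_const (a := 1) (b := 0) (by simp)

theorem integrable_gaussDensity_mul_assocCoef_mul {σ : ℝ} (hσ : σ ≠ 0) (θ : E)
    (β : Fin k → E) (i j : Fin k) :
    Integrable (fun x ↦ gaussDensity σ θ x * (assocCoef σ β i x * assocCoef σ β j x)) := by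
  simpa [mul_assoc] using integrable_gaussDensity_mul_assocCoef_smul hσ θ β i
    (continuous_assocCoef σ β j) (a := 1) (b := 0)
    (by simp [abs_of_nonneg (assocCoef_nonneg σ β j _), assocCoef_le_one])

theorem stein_identity_assocCoef {σ : ℝ} (hσ : σ ≠ 0) (θ : E) (β : Fin k → E) (i : Fin k) :
    ∫ x, (gaussDensity σ θ x * assocCoef σ β i x) • (x - θ)
      = ∫ x, (gaussDensity σ θ x * assocCoef σ β i x) • (β i - assocMean σ β x) := by
  have hG : Integrable fun x ↦
      gaussDensity σ θ x • (σ ^ 2)⁻¹ • assocCoef σ β i x • (β i - assocMean σ β x) := by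
    refine ((integrable_gaussDensity_mul_assocCoef_smul hσ θ β i
      (w := fun x ↦ β i - assocMean σ β x) (continuous_const.sub (continuous_assocMean σ β))
      (a := ‖β i‖ + ∑ ℓ, ‖β ℓ‖) (b := 0) fun x ↦ ?_).smul
      (σ ^ 2)⁻¹).congr (.of_forall fun x ↦ ?_)
    · simpa using norm_sub_assocMean_le σ β (β i) x
    · simp only [Pi.smul_apply]
      rw [mul_smul, smul_comm (σ ^ 2)⁻¹ (gaussDensity σ θ x)]
  rw [stein_identity_gaussDensity hσ θ (hasFDerivAt_assocCoef σ β i) ?_ hG ?_, ← integral_smul]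
  · refine integral_congr_ae (.of_forall fun x ↦ ?_)
    simp only
    rw [smul_comm (σ ^ 2), smul_smul (σ ^ 2), mul_inv_cancel₀ (pow_ne_zero 2 hσ), one_smul,
      smul_smul]
  · exact integrable_gaussDensity_mul_assocCoef hσ θ β i
  · exact integrable_gaussDensity_mul_assocCoef_smul hσ θ β i (by fun_prop) (a := 0) (b := 1)
      (by simp)

theorem integral_gaussDensity_mul_assocCoef_smul_sub {σ : ℝ} (hσ : σ ≠ 0) (θ : E)
    (β : Fin k → E) (i : Fin k) :
    ∫ x, (gaussDensity σ θ x * assocCoef σ β i x) • (β i - x)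
      = ∑ ℓ, (∫ x, gaussDensity σ θ x * (assocCoef σ β i x * assocCoef σ β ℓ x)) • β ℓ
        - (∫ x, gaussDensity σ θ x * assocCoef σ β i x) • θ := by
  set φψ : E → ℝ := fun x ↦ gaussDensity σ θ x * assocCoef σ β i x
  have hφψ : Integrable φψ := integrable_gaussDensity_mul_assocCoef hσ θ β i
  have hφψψ := integrable_gaussDensity_mul_assocCoef_mul hσ θ β i
  have hmean : Integrable fun x ↦ ∑ ℓ, (gaussDensity σ θ x *
      (assocCoef σ β i x * assocCoef σ β ℓ x)) • β ℓ - φψ x • θ :=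
    (integrable_finsetSum _ fun ℓ _ ↦ (hφψψ ℓ).smul_const _).sub (hφψ.smul_const θ)
  have hcenter : Integrable fun x ↦ φψ x • (x - θ) :=
    integrable_gaussDensity_mul_assocCoef_smul hσ θ β i (by fun_prop) (a := 0) (b := 1) (by simp)
  have hresid : Integrable fun x ↦ φψ x • (β i - assocMean σ β x) :=
    integrable_gaussDensity_mul_assocCoef_smul hσ θ β i
      (continuous_const.sub (continuous_assocMean σ β)) (b := 0)
      (by simpa using norm_sub_assocMean_le σ β (β i))
  have hdiff : Integrable fun x ↦ φψ x • (β i - assocMean σ β x) - φψ x • (x - θ) :=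
    hresid.sub hcenter
  have hsplit (x : E) : φψ x • (β i - x) = (∑ ℓ, (gaussDensity σ θ x *
      (assocCoef σ β i x * assocCoef σ β ℓ x)) • β ℓ - φψ x • θ)
        + (φψ x • (β i - assocMean σ β x) - φψ x • (x - θ)) := by
    have : ∑ ℓ, (gaussDensity σ θ x * (assocCoef σ β i x * assocCoef σ β ℓ x)) • β ℓ
        = φψ x • assocMean σ β x := by
      simp only [assocMean, Finset.smul_sum, smul_smul, φψ, mul_assoc]
    rw [this]
    module
  calc ∫ x, φψ x • (β i - x)
      = (∫ x, ∑ ℓ, (gaussDensity σ θ x * (assocCoef σ β i x * assocCoef σ β ℓ x)) • β ℓ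
          - φψ x • θ) + ((∫ x, φψ x • (β i - assocMean σ β x)) - ∫ x, φψ x • (x - θ)) := by
        rw [integral_congr_ae (.of_forall hsplit), integral_add hmean hdiff,
          integral_sub hresid hcenter]
    _ = _ := by
        rw [← stein_identity_assocCoef hσ θ β i, sub_self, add_zero,
          integral_sub (integrable_finsetSum _ fun ℓ _ ↦ (hφψψ ℓ).smul_const _)
            (hφψ.smul_const θ), integral_finsetSum _ fun ℓ _ ↦ (hφψψ ℓ).smul_const _]
        simp only [integral_smul_const, φψ]

end Mixture

theorem equivalent_stationary_condition_general {d k ks : ℕ} (hks : 0 < ks)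
    (σ : ℝ) (hσ : 0 < σ)
    (θ : Fin ks → EuclideanSpace ℝ (Fin d)) (β : Fin k → EuclideanSpace ℝ (Fin d)) :
    (∀ j : Fin k,
        ∫ x, (mixDensity σ θ x * assocCoef σ β j x) • (β j - x) = 0)
      ↔ (∀ i : Fin k,
        ∑ j : Fin k,
            (∑ s : Fin ks, ∫ x, gaussDensity σ (θ s) x * (assocCoef σ β i x * assocCoef σ β j x)) • β j
          = ∑ s : Fin ks, (∫ x, gaussDensity σ (θ s) x * assocCoef σ β i x) • θ s) := by
  refine forall_congr' fun i ↦ ?_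
  have hint (s : Fin ks) := integrable_gaussDensity_mul_assocCoef_smul hσ.ne' (θ s) β i
    (w := fun x ↦ β i - x) (by fun_prop) (a := ‖β i - θ s‖) (b := 1) fun x ↦ by
      simpa [norm_sub_rev x] using norm_sub_le_norm_sub_add_norm_sub (β i) (θ s) x
  rw [integral_mixDensity_mul_smul σ θ hint,
    smul_eq_zero_iff_right (inv_ne_zero (Nat.cast_ne_zero.2 hks.ne')),
    Finset.sum_congr rfl fun s _ ↦ integral_gaussDensity_mul_assocCoef_smul_sub hσ.ne' (θ s) β i,
    Finset.sum_sub_distrib, sub_eq_zero, Finset.sum_comm]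
  simp only [← Finset.sum_smul]

/-- **Equivalent stationary condition** (Theorem 1): `β` is a stationary point of `L`
iff for all `i`, `∑_j β_j ∑_s E_s[Ψ_i Ψ_j] = ∑_s θ*_s E_s[Ψ_i]`. -/
theorem equivalent_stationary_condition {d k ks : ℕ} (hk : 0 < k) (hks : 0 < ks)
    (σ : ℝ) (hσ : 0 < σ)
    (θ : Fin ks → EuclideanSpace ℝ (Fin d)) (β : Fin k → EuclideanSpace ℝ (Fin d)) :
    (∀ j : Fin k,
        ∫ x, (mixDensity σ θ x * assocCoef σ β j x) • (β j - x) = 0)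
      ↔ (∀ i : Fin k,
        ∑ j : Fin k,
            (∑ s : Fin ks, ∫ x, gaussDensity σ (θ s) x * (assocCoef σ β i x * assocCoef σ β j x)) • β j
          = ∑ s : Fin ks, (∫ x, gaussDensity σ (θ s) x * assocCoef σ β i x) • θ s) :=
  equivalent_stationary_condition_general hks σ hσ θ β
end

section
/- Variance lower bound for a logistic transform of a Gaussian: let a, w be fixed reals, X ~ N(0,1), and Y = 1/(1 + e^{-(X-a)w}). Then Var(Y) ≥ (|w|⁵/48)·e^{-4(|w|+2|a|)²}. -/
/-
With `σ` the sigmoid, `Y = σ((X - a) w)`. On one of the unit intervals `±[|a| + 1, |a| + 2]` we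
have `(X - a) w ≥ |w|` and on the other `(X - a) w ≤ -|w|`; since `σ m ≥ 1/2 + m/5` on `[0, 1]`,
`Y ≥ 1/2 + d` on the first and `Y ≤ 1/2 - d` on the second, with `d = min |w| 1 / 5`. Whichever
side of `1/2` the mean of `Y` lies on, `|Y - 𝔼 Y| ≥ d` on one of these intervals, whose Gaussian
mass is at least the density at `|a| + 2`, so Chebyshev's inequality gives
`Var Y ≥ d² φ(|a| + 2)`. Elementary estimates of the exponentials compare this with the claim.
-/

open MeasureTheory ProbabilityTheory Real Set

lemma one_add_div_pow_le_exp {x : ℝ} (hx : 0 ≤ x) (n : ℕ) : (1 + x / n) ^ n ≤ exp x := by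
  rcases n.eq_zero_or_pos with rfl | hn
  · simpa using one_le_exp hx
  calc (1 + x / n) ^ n ≤ exp (x / n) ^ n := by
        gcongr
        linarith [add_one_le_exp (x / n)]
    _ = exp x := by rw [← exp_nat_mul, mul_div_cancel₀ _ (by positivity)]

lemma half_add_div_five_le_sigmoid {m : ℝ} (h0 : 0 ≤ m) (h1 : m ≤ 1) :
    1 / 2 + m / 5 ≤ sigmoid m := by
  have hcube : (1 + m / 3) ^ 3 ≤ exp m := by simpa using one_add_div_pow_le_exp h0 3
  have hexp : exp (-m) ≤ (5 - 2 * m) / (5 + 2 * m) := by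
    rw [exp_neg, inv_le_comm₀ (exp_pos m) (by apply div_pos <;> linarith), inv_div,
      div_le_iff₀ (by linarith)]
    nlinarith [mul_nonneg h0 h0, mul_nonneg (mul_nonneg h0 h0) h0]
  calc 1 / 2 + m / 5 = (1 + (5 - 2 * m) / (5 + 2 * m))⁻¹ := by
        field_simp
        ring
    _ ≤ sigmoid m := by
        rw [sigmoid_def]
        gcongr

lemma half_add_min_div_five_le_sigmoid {s t : ℝ} (h : |s| ≤ t) :
    1 / 2 + min |s| 1 / 5 ≤ sigmoid t :=
  (half_add_div_five_le_sigmoid (by positivity) (min_le_right _ _)).trans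
    (sigmoid_le ((min_le_left _ _).trans h))

lemma sigmoid_le_half_sub_min_div_five {s t : ℝ} (h : t ≤ -|s|) :
    sigmoid t ≤ 1 / 2 - min |s| 1 / 5 := by
  have := half_add_min_div_five_le_sigmoid (s := s) (t := -t) (by linarith)
  rw [sigmoid_neg] at this
  linarith

lemma sq_mul_le_variance_of_separated {Ω : Type*} [MeasurableSpace Ω] {μ : Measure Ω}
    [IsFiniteMeasure μ] {X : Ω → ℝ} (hX : MemLp X 2 μ) {A B : Set Ω} {θ d q : ℝ} (hd : 0 ≤ d)
    (hA : ∀ ω ∈ A, θ + d ≤ X ω) (hB : ∀ ω ∈ B, X ω ≤ θ - d)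
    (hqA : q ≤ μ.real A) (hqB : q ≤ μ.real B) :
    d ^ 2 * q ≤ variance X μ := by
  rcases hd.eq_or_lt with rfl | hd
  · simp [variance_nonneg]
  obtain ⟨S, hS, hqS⟩ : ∃ S, S ⊆ {ω | d ≤ |X ω - μ[X]|} ∧ q ≤ μ.real S := by
    rcases le_total μ[X] θ with h | h
    · exact ⟨A, fun ω hω => (by linarith [hA ω hω] : d ≤ X ω - μ[X]).trans (le_abs_self _), hqA⟩
    · exact ⟨B, fun ω hω => (by linarith [hB ω hω] : d ≤ -(X ω - μ[X])).trans (neg_le_abs _),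
        hqB⟩
  have hcheb : μ.real S ≤ variance X μ / d ^ 2 :=
    ENNReal.toReal_le_of_le_ofReal (div_nonneg (variance_nonneg X μ) (sq_nonneg d))
      ((measure_mono hS).trans (meas_ge_le_variance_div_sq hX hd))
  rw [le_div_iff₀ (by positivity)] at hcheb
  calc d ^ 2 * q ≤ d ^ 2 * μ.real S := by gcongr
    _ ≤ variance X μ := by linarith

lemma gaussianPDFReal_le_of_abs_sub_le {μ : ℝ} {v : NNReal} {x y : ℝ} (h : |x - μ| ≤ |y - μ|) :
    gaussianPDFReal μ v y ≤ gaussianPDFReal μ v x := by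
  unfold gaussianPDFReal
  gcongr _ * exp ?_
  exact div_le_div_of_nonneg_right (neg_le_neg (sq_le_sq.2 h)) (by positivity)

lemma mul_gaussianPDFReal_le_measureReal_Icc {s t R : ℝ} (hst : s ≤ t) (hs : -R ≤ s)
    (ht : t ≤ R) : (t - s) * gaussianPDFReal 0 1 R ≤ (gaussianReal 0 1).real (Icc s t) := by
  rw [measureReal_def, gaussianReal_apply_eq_integral 0 one_ne_zero, ENNReal.toReal_ofReal
    (setIntegral_nonneg measurableSet_Icc fun x _ => gaussianPDFReal_nonneg 0 1 x)]
  have hpdf : ∀ x ∈ Icc s t, gaussianPDFReal 0 1 R ≤ gaussianPDFReal 0 1 x := fun x hx =>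
    gaussianPDFReal_le_of_abs_sub_le (by
      rw [sub_zero, sub_zero, abs_le, abs_of_nonneg (by linarith)]
      exact ⟨by linarith [hx.1], by linarith [hx.2]⟩)
  have := setIntegral_ge_of_const_le_real measurableSet_Icc (by simp) hpdf
    (integrable_gaussianPDFReal 0 1).integrableOn
  rwa [volume_real_Icc_of_le hst, mul_comm] at this

lemma gaussianPDFReal_le_measureReal_setOf_abs_le_mul (a w : ℝ) :
    gaussianPDFReal 0 1 (|a| + 2) ≤ (gaussianReal 0 1).real {x | |w| ≤ (x - a) * w} := by
  have ha := abs_nonneg a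
  rcases le_total 0 w with hw | hw
  · calc gaussianPDFReal 0 1 (|a| + 2)
          = (|a| + 2 - (|a| + 1)) * gaussianPDFReal 0 1 (|a| + 2) := by ring
      _ ≤ (gaussianReal 0 1).real (Icc (|a| + 1) (|a| + 2)) :=
          mul_gaussianPDFReal_le_measureReal_Icc (by linarith) (by linarith) le_rfl
      _ ≤ _ := measureReal_mono fun x hx => by
          have : 1 ≤ x - a := by linarith [hx.1, le_abs_self a]
          rw [mem_ofPred_eq, abs_of_nonneg hw]
          nlinarith
  · calc gaussianPDFReal 0 1 (|a| + 2)
          = (-(|a| + 1) - -(|a| + 2)) * gaussianPDFReal 0 1 (|a| + 2) := by ring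
      _ ≤ (gaussianReal 0 1).real (Icc (-(|a| + 2)) (-(|a| + 1))) :=
          mul_gaussianPDFReal_le_measureReal_Icc (by linarith) le_rfl (by linarith)
      _ ≤ _ := measureReal_mono fun x hx => by
          have : x - a ≤ -1 := by linarith [hx.2, neg_abs_le a]
          rw [mem_ofPred_eq, abs_of_nonpos hw]
          nlinarith

lemma pow_five_mul_exp_neg_four_sq_le (v : ℝ) :
    v ^ 5 * exp (-4 * v ^ 2) ≤ min v 1 ^ 2 / 12 := by
  rw [neg_mul, exp_neg, ← div_eq_mul_inv, div_le_iff₀ (exp_pos _)]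
  rcases le_total v 1 with h1 | h1
  · have hcube : (1 + 4 * v ^ 2 / 3) ^ 3 ≤ exp (4 * v ^ 2) := by
      simpa using one_add_div_pow_le_exp (x := 4 * v ^ 2) (by positivity) 3
    have hpoly : 12 * v ^ 3 ≤ (1 + 4 * v ^ 2 / 3) ^ 3 := by
      nlinarith [sq_nonneg (v - 7/10), sq_nonneg (v ^ 2 - v), sq_nonneg (v ^ 2 - 3 / 4),
        sq_nonneg (2 * v ^ 2 - 3 * v + 1)]
    rw [min_eq_left h1]
    nlinarith [sq_nonneg v]
  · have hquart : (1 + v ^ 2) ^ 4 ≤ exp (4 * v ^ 2) := by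
      convert one_add_div_pow_le_exp (x := 4 * v ^ 2) (by positivity) 4 using 3
      push_cast
      ring
    have hpoly : 12 * v ^ 5 ≤ (1 + v ^ 2) ^ 4 := by
      nlinarith [sq_nonneg (v ^ 2 - v), sq_nonneg (v ^ 2 - 1), sq_nonneg (v - 1)]
    rw [min_eq_right h1]
    linarith

lemma exp_neg_four_sq_add_le {v b : ℝ} (hv : 0 ≤ v) (hb : 0 ≤ b) :
    exp (-4 * (v + 2 * b) ^ 2) ≤ exp (21 / 10) * exp (-4 * v ^ 2) * exp (-(b + 2) ^ 2 / 2) := by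
  rw [← exp_add, ← exp_add, exp_le_exp]
  -- `4 (v + 2b)² ≥ 4 v² + 16 b²`, and `16 b² + 21/10 - (b + 2)²/2` has negative discriminant.
  nlinarith [mul_nonneg hv hb, sq_nonneg (b - 1 / 16)]

lemma exp_twentyone_div_ten_lt : exp (21 / 10) < 8.22 := by
  rw [show (21 / 10 : ℝ) = 1 + 1 + 1 / 10 by norm_num, exp_add, exp_add]
  calc exp 1 * exp 1 * exp (1 / 10) ≤ 2.7182818286 * 2.7182818286 * (1 / (1 - 1 / 10)) := by
        gcongr
        · exact exp_one_lt_d9.le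
        · exact exp_one_lt_d9.le
        · exact exp_bound_div_one_sub_of_interval (by norm_num) (by norm_num)
    _ < 8.22 := by norm_num

lemma sqrt_two_mul_pi_lt : √(2 * π) < 2.6 := by
  rw [sqrt_lt' (by norm_num)]
  nlinarith [pi_lt_d2]

lemma pow_five_div_mul_exp_le_sq_mul_gaussianPDFReal {v b : ℝ} (hv : 0 ≤ v) (hb : 0 ≤ b) :
    v ^ 5 / 48 * exp (-4 * (v + 2 * b) ^ 2) ≤ (min v 1 / 5) ^ 2 * gaussianPDFReal 0 1 (b + 2) := by
  have hpdf : gaussianPDFReal 0 1 (b + 2) = (√(2 * π))⁻¹ * exp (-(b + 2) ^ 2 / 2) := by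
    simp [gaussianPDFReal]
  rw [hpdf]
  set E := exp (-(b + 2) ^ 2 / 2)
  have hE : 0 < E := exp_pos _
  calc v ^ 5 / 48 * exp (-4 * (v + 2 * b) ^ 2)
      ≤ v ^ 5 / 48 * (exp (21 / 10) * exp (-4 * v ^ 2) * E) := by
        gcongr
        exact exp_neg_four_sq_add_le hv hb
    _ = exp (21 / 10) * (v ^ 5 * exp (-4 * v ^ 2)) * E / 48 := by ring
    _ ≤ 8.22 * (min v 1 ^ 2 / 12) * E / 48 := by
        gcongr
        exacts [exp_twentyone_div_ten_lt.le, pow_five_mul_exp_neg_four_sq_le v]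
    _ ≤ (min v 1 / 5) ^ 2 * (2.6⁻¹ * E) := by
        nlinarith [mul_nonneg (sq_nonneg (min v 1)) hE.le]
    _ ≤ (min v 1 / 5) ^ 2 * ((√(2 * π))⁻¹ * E) := by
        gcongr
        exact sqrt_two_mul_pi_lt.le

/-- **Variance lower bound** (Lemma): for `X ~ N(0,1)` and `Y = 1/(1 + e^{-(X-a)w})`,
`Var(Y) ≥ (|w|⁵/48)·e^{-4(|w|+2|a|)²}`. -/
theorem logistic_gaussian_variance_lower_bound (a w : ℝ) :
    |w| ^ 5 / 48 * Real.exp (-4 * (|w| + 2 * |a|) ^ 2)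
      ≤ variance (fun x => (1 + Real.exp (-(x - a) * w))⁻¹) (gaussianReal 0 1) := by
  have hY : (fun x => (1 + exp (-(x - a) * w))⁻¹) = fun x => sigmoid ((x - a) * w) := by
    ext x
    rw [sigmoid_def, neg_mul]
  have hmem : MemLp (fun x => sigmoid ((x - a) * w)) 2 (gaussianReal 0 1) :=
    memLp_of_bounded (ae_of_all _ fun x => ⟨sigmoid_nonneg _, sigmoid_le_one _⟩) (by fun_prop) 2
  rw [hY]
  calc _ ≤ (min |w| 1 / 5) ^ 2 * gaussianPDFReal 0 1 (|a| + 2) :=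
        pow_five_div_mul_exp_le_sq_mul_gaussianPDFReal (abs_nonneg w) (abs_nonneg a)
    _ ≤ _ := sq_mul_le_variance_of_separated hmem (θ := 1 / 2) (by positivity)
        (fun x hx => half_add_min_div_five_le_sigmoid hx)
        (fun x (hx : |-w| ≤ (x - a) * -w) => sigmoid_le_half_sub_min_div_five (by
          rw [abs_neg] at hx
          linarith))
        (gaussianPDFReal_le_measureReal_setOf_abs_le_mul a w)
        (gaussianPDFReal_le_measureReal_setOf_abs_le_mul a (-w))
end
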